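/- arXiv:2604.09276 — 2 statements merged into one kernel-verified Lean document; each statement's English description precedes it below -/
import Mathlib

section
/- Let δ ∈ (0,1], L = ⌈1/δ⌉, G > 0, and let C be a δ-contractive compressor. Let z_i^b ∈ ℝ^d (i ∈ {1,…,n}, b ≥ 1) be random vectors with ‖z_i^b‖ ≤ LG almost surely, where z_i^b depends only on compressor invocations from blocks before b. Define e_i¹ = 0 and e_i^{b+1} = e_i^b + z_i^b − FCC(e_i^b + z_i^b, C, L). Then for every b ≥ 1, (1/n) Σ_{i=1}^n E[‖e_i^{b+1}‖²] ≤ 4 e² L² G², where e is Euler's number; consequently E[‖(1/n) Σ_{i=1}^n e_i^{b+1}‖²] ≤ 4 e² L² G². -/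
open MeasureTheory Real
open scoped ENNReal NNReal BigOperators RealInnerProductSpace

private lemma sq_add_le_nn (x y : ℝ≥0) : (x + y) ^ 2 ≤ 2 * x ^ 2 + 2 * y ^ 2 := by
  rw [← NNReal.coe_le_coe]
  push_cast
  nlinarith [sq_nonneg ((x : ℝ) - y)]

private lemma sq_add_le (x y : ℝ≥0∞) : (x + y) ^ 2 ≤ 2 * x ^ 2 + 2 * y ^ 2 := by
  have htop : ∀ w : ℝ≥0∞, (⊤ : ℝ≥0∞) ^ 2 ≤ 2 * (⊤ : ℝ≥0∞) ^ 2 + 2 * w ^ 2 := by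
    intro w
    rw [ENNReal.top_pow (by norm_num), ENNReal.mul_top (by norm_num)]
    exact le_add_right le_rfl
  rcases eq_or_ne x ⊤ with hx | hx
  · subst hx; exact htop y
  rcases eq_or_ne y ⊤ with hy | hy
  · subst hy
    calc (x + ⊤) ^ 2 = (⊤ : ℝ≥0∞) ^ 2 := by rw [add_top]
      _ ≤ 2 * (⊤:ℝ≥0∞) ^ 2 + 2 * x ^ 2 := htop x
      _ = 2 * x ^ 2 + 2 * (⊤:ℝ≥0∞) ^ 2 := by ring
  lift x to ℝ≥0 using hx
  lift y to ℝ≥0 using hy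
  exact_mod_cast sq_add_le_nn x y


/-- learner-side block error-feedback bound for D-FTFCL. Let `δ ∈ (0,1]`,
`L = ⌈1/δ⌉`, `C` a `δ`-contractive compressor, and `z_i^b` random vectors with
`‖z_i^b‖ ≤ LG` a.s. With the block error-feedback recursion `e_i¹ = 0`,
`e_i^{b+1} = e_i^b + z_i^b − FCC(e_i^b + z_i^b, C, L)`, one has for every `b ≥ 1` that
`(1/n) Σ_i E[‖e_i^{b+1}‖²] ≤ 4e²L²G²`, and consequently
`E[‖(1/n) Σ_i e_i^{b+1}‖²] ≤ 4e²L²G²`, where `e` is Euler's number.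

The FCC output `FCC(e_i^b + z_i^b, C, L)` is the random vector `v i b`; the guarantee
`E[‖FCC(x,C,L) − x‖²] ≤ (1−δ)^L E[‖x‖²]` of `L` rounds of fast compressed communication
with a `δ`-contractive compressor (applied to inputs depending only on past invocations)
is encoded by the hypothesis `hFCC`. -/
theorem dftfcl_learner_error_bound
    {d n : ℕ} (hn : 1 ≤ n)
    {Ω : Type*} [MeasurableSpace Ω] (μ : Measure Ω) [IsProbabilityMeasure μ]
    (δ G : ℝ) (hδ0 : 0 < δ) (hδ1 : δ ≤ 1) (hG : 0 < G)
    (L : ℕ) (hL : L = ⌈1 / δ⌉₊)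
    (z v e : ℕ → ℕ → Ω → EuclideanSpace ℝ (Fin d))
    (hmz : ∀ i b, Measurable (z i b)) (hmv : ∀ i b, Measurable (v i b))
    (hzbound : ∀ i ∈ Finset.Icc 1 n, ∀ b, 1 ≤ b → ∀ᵐ ω ∂μ, ‖z i b ω‖ ≤ (L : ℝ) * G)
    (he1 : ∀ i, e i 1 = fun _ => 0)
    (herec : ∀ i, ∀ b, 1 ≤ b → ∀ ω, e i (b + 1) ω = e i b ω + z i b ω - v i b ω)
    (hFCC : ∀ i ∈ Finset.Icc 1 n, ∀ b, 1 ≤ b →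
      ∫⁻ ω, (‖v i b ω - (e i b ω + z i b ω)‖₊ : ℝ≥0∞) ^ 2 ∂μ
        ≤ ENNReal.ofReal ((1 - δ) ^ L) *
          ∫⁻ ω, (‖e i b ω + z i b ω‖₊ : ℝ≥0∞) ^ 2 ∂μ) :
    ∀ b, 1 ≤ b →
      (n : ℝ≥0∞)⁻¹ * ∑ i ∈ Finset.Icc 1 n, ∫⁻ ω, (‖e i (b + 1) ω‖₊ : ℝ≥0∞) ^ 2 ∂μ
          ≤ ENNReal.ofReal (4 * Real.exp 1 ^ 2 * (L : ℝ) ^ 2 * G ^ 2) ∧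
        ∫⁻ ω, (‖(n : ℝ)⁻¹ • ∑ i ∈ Finset.Icc 1 n, e i (b + 1) ω‖₊ : ℝ≥0∞) ^ 2 ∂μ
          ≤ ENNReal.ofReal (4 * Real.exp 1 ^ 2 * (L : ℝ) ^ 2 * G ^ 2) := by
  have hEpos : 0 < Real.exp 1 := Real.exp_pos 1
  set M : ℝ := 4 * Real.exp 1 ^ 2 * (L : ℝ) ^ 2 * G ^ 2 with hM
  have hMnonneg : 0 ≤ M := by positivity
  have hn0 : (n : ℝ≥0∞) ≠ 0 := by
    exact_mod_cast Nat.one_le_iff_ne_zero.mp hn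
  -- contraction factor bound
  have hρreal : (1 - δ) ^ L ≤ (Real.exp 1)⁻¹ := by
    have h0 : (0 : ℝ) ≤ 1 - δ := by linarith
    have h2 : (1 - δ) ≤ Real.exp (-δ) := by
      have := Real.add_one_le_exp (-δ); linarith
    have h3 : (1 - δ) ^ L ≤ Real.exp (-δ) ^ L := pow_le_pow_left₀ h0 h2 L
    have h4 : Real.exp (-δ) ^ L = Real.exp ((L : ℝ) * (-δ)) := by
      rw [← Real.exp_nat_mul]
    have hL1 : 1 / δ ≤ (L : ℝ) := by rw [hL]; exact Nat.le_ceil _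
    have h5 : (1 : ℝ) ≤ (L : ℝ) * δ := by
      rw [div_le_iff₀ hδ0] at hL1; linarith
    calc (1 - δ) ^ L ≤ Real.exp ((L : ℝ) * (-δ)) := h4 ▸ h3
      _ ≤ Real.exp (-1) := Real.exp_le_exp.mpr (by nlinarith)
      _ = (Real.exp 1)⁻¹ := Real.exp_neg 1
  -- measurability
  have heM : ∀ i, ∀ b, 1 ≤ b → Measurable (e i b) := by
    intro i b hb
    induction b, hb using Nat.le_induction with
    | base => rw [he1]; exact measurable_const
    | succ b hb ih =>
      have hfe : e i (b + 1) = fun ω => e i b ω + z i b ω - v i b ω :=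
        funext (herec i b hb)
      rw [hfe]; exact (ih.add (hmz i b)).sub (hmv i b)
  have hfm : ∀ i, ∀ b, 1 ≤ b → Measurable fun ω => (‖e i b ω‖₊ : ℝ≥0∞) ^ 2 :=
    fun i b hb => ((heM i b hb).nnnorm.coe_nnreal_ennreal).pow_const 2
  have hzm : ∀ i b, Measurable fun ω => (‖z i b ω‖₊ : ℝ≥0∞) ^ 2 :=
    fun i b => ((hmz i b).nnnorm.coe_nnreal_ennreal).pow_const 2
  -- z second moment bound
  have hz2 : ∀ i ∈ Finset.Icc 1 n, ∀ b, 1 ≤ b →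
      ∫⁻ ω, (‖z i b ω‖₊ : ℝ≥0∞) ^ 2 ∂μ ≤ ENNReal.ofReal (((L : ℝ) * G) ^ 2) := by
    intro i hi b hb
    calc ∫⁻ ω, (‖z i b ω‖₊ : ℝ≥0∞) ^ 2 ∂μ
        ≤ ∫⁻ _, ENNReal.ofReal (((L : ℝ) * G) ^ 2) ∂μ := by
          refine lintegral_mono_ae ((hzbound i hi b hb).mono fun ω h => ?_)
          rw [← enorm_eq_nnnorm, ← ofReal_norm, ← ENNReal.ofReal_pow (norm_nonneg _)]
          exact ENNReal.ofReal_le_ofReal (pow_le_pow_left₀ (norm_nonneg _) h 2)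
      _ = ENNReal.ofReal (((L : ℝ) * G) ^ 2) := by
          rw [lintegral_const, measure_univ, mul_one]
  -- key per-agent bound
  have key : ∀ b, 1 ≤ b → ∀ i ∈ Finset.Icc 1 n,
      ∫⁻ ω, (‖e i b ω‖₊ : ℝ≥0∞) ^ 2 ∂μ ≤ ENNReal.ofReal M := by
    intro b hb
    induction b, hb using Nat.le_induction with
    | base =>
      intro i hi
      simp [he1 i]
    | succ b hb ih =>
      intro i hi
      have heq : ∀ ω, (‖e i (b + 1) ω‖₊ : ℝ≥0∞) ^ 2
          = (‖v i b ω - (e i b ω + z i b ω)‖₊ : ℝ≥0∞) ^ 2 := by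
        intro ω
        rw [herec i b hb ω, ← nnnorm_neg (e i b ω + z i b ω - v i b ω)]
        congr 2
        abel
      have hsplit : ∫⁻ ω, (‖e i b ω + z i b ω‖₊ : ℝ≥0∞) ^ 2 ∂μ
          ≤ 2 * ∫⁻ ω, (‖e i b ω‖₊ : ℝ≥0∞) ^ 2 ∂μ
            + 2 * ∫⁻ ω, (‖z i b ω‖₊ : ℝ≥0∞) ^ 2 ∂μ := by
        have hpt : ∀ ω, (‖e i b ω + z i b ω‖₊ : ℝ≥0∞) ^ 2
            ≤ 2 * (‖e i b ω‖₊ : ℝ≥0∞) ^ 2 + 2 * (‖z i b ω‖₊ : ℝ≥0∞) ^ 2 := by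
          intro ω
          refine le_trans ?_ (sq_add_le _ _)
          refine pow_le_pow_left₀ (zero_le) ?_ 2
          exact_mod_cast nnnorm_add_le (e i b ω) (z i b ω)
        calc ∫⁻ ω, (‖e i b ω + z i b ω‖₊ : ℝ≥0∞) ^ 2 ∂μ
            ≤ ∫⁻ ω, (2 * (‖e i b ω‖₊ : ℝ≥0∞) ^ 2 + 2 * (‖z i b ω‖₊ : ℝ≥0∞) ^ 2) ∂μ :=
              lintegral_mono hpt
          _ = 2 * ∫⁻ ω, (‖e i b ω‖₊ : ℝ≥0∞) ^ 2 ∂μ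
              + 2 * ∫⁻ ω, (‖z i b ω‖₊ : ℝ≥0∞) ^ 2 ∂μ := by
              rw [lintegral_add_left ((hfm i b hb).const_mul 2),
                lintegral_const_mul 2 (hfm i b hb), lintegral_const_mul 2 (hzm i b)]
      have hfin : (Real.exp 1)⁻¹ * (2 * M + 2 * ((L : ℝ) * G) ^ 2) ≤ M := by
        rw [inv_mul_le_iff₀ hEpos, hM]
        have hc : 8 * Real.exp 1 ^ 2 + 2 ≤ 4 * Real.exp 1 ^ 3 := by
          nlinarith [Real.exp_one_gt_d9]
        nlinarith [mul_le_mul_of_nonneg_right hc (sq_nonneg ((L : ℝ) * G))]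
      calc ∫⁻ ω, (‖e i (b + 1) ω‖₊ : ℝ≥0∞) ^ 2 ∂μ
          = ∫⁻ ω, (‖v i b ω - (e i b ω + z i b ω)‖₊ : ℝ≥0∞) ^ 2 ∂μ :=
            lintegral_congr heq
        _ ≤ ENNReal.ofReal ((1 - δ) ^ L) *
            ∫⁻ ω, (‖e i b ω + z i b ω‖₊ : ℝ≥0∞) ^ 2 ∂μ := hFCC i hi b hb
        _ ≤ ENNReal.ofReal ((1 - δ) ^ L) *
            (2 * ENNReal.ofReal M + 2 * ENNReal.ofReal (((L : ℝ) * G) ^ 2)) := by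
            refine mul_le_mul_right (hsplit.trans ?_) _
            gcongr
            exacts [ih i hi, hz2 i hi b hb]
        _ ≤ ENNReal.ofReal ((Real.exp 1)⁻¹) *
            ENNReal.ofReal (2 * M + 2 * ((L : ℝ) * G) ^ 2) := by
            refine mul_le_mul' (ENNReal.ofReal_le_ofReal hρreal) (le_of_eq ?_)
            rw [ENNReal.ofReal_add (by positivity) (by positivity),
              ENNReal.ofReal_mul (by norm_num : (0:ℝ) ≤ 2),
              ENNReal.ofReal_mul (by norm_num : (0:ℝ) ≤ 2), ENNReal.ofReal_ofNat]
        _ = ENNReal.ofReal ((Real.exp 1)⁻¹ * (2 * M + 2 * ((L : ℝ) * G) ^ 2)) := by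
            rw [← ENNReal.ofReal_mul (by positivity)]
        _ ≤ ENNReal.ofReal M := ENNReal.ofReal_le_ofReal hfin
  intro b hb
  have hb1 : 1 ≤ b + 1 := by omega
  have part1 : (n : ℝ≥0∞)⁻¹ * ∑ i ∈ Finset.Icc 1 n,
      ∫⁻ ω, (‖e i (b + 1) ω‖₊ : ℝ≥0∞) ^ 2 ∂μ ≤ ENNReal.ofReal M := by
    calc (n : ℝ≥0∞)⁻¹ * ∑ i ∈ Finset.Icc 1 n, ∫⁻ ω, (‖e i (b + 1) ω‖₊ : ℝ≥0∞) ^ 2 ∂μ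
        ≤ (n : ℝ≥0∞)⁻¹ * ∑ _i ∈ Finset.Icc 1 n, ENNReal.ofReal M :=
          mul_le_mul_right (Finset.sum_le_sum fun i hi => key (b + 1) hb1 i hi) _
      _ = (n : ℝ≥0∞)⁻¹ * ((n : ℝ≥0∞) * ENNReal.ofReal M) := by
          rw [Finset.sum_const, Nat.card_Icc, nsmul_eq_mul]
          norm_num
      _ = ENNReal.ofReal M := by
          rw [← mul_assoc, ENNReal.inv_mul_cancel hn0 (ENNReal.natCast_ne_top n), one_mul]
  refine ⟨part1, ?_⟩
  have hnR : (0 : ℝ) < n := by exact_mod_cast hn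
  have hpt : ∀ ω, (‖(n : ℝ)⁻¹ • ∑ i ∈ Finset.Icc 1 n, e i (b + 1) ω‖₊ : ℝ≥0∞) ^ 2
      ≤ (n : ℝ≥0∞)⁻¹ * ∑ i ∈ Finset.Icc 1 n, (‖e i (b + 1) ω‖₊ : ℝ≥0∞) ^ 2 := by
    intro ω
    have hreal : ‖(n : ℝ)⁻¹ • ∑ i ∈ Finset.Icc 1 n, e i (b + 1) ω‖ ^ 2
        ≤ (n : ℝ)⁻¹ * ∑ i ∈ Finset.Icc 1 n, ‖e i (b + 1) ω‖ ^ 2 := by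
      have h1 : ‖(n : ℝ)⁻¹ • ∑ i ∈ Finset.Icc 1 n, e i (b + 1) ω‖
          = (n : ℝ)⁻¹ * ‖∑ i ∈ Finset.Icc 1 n, e i (b + 1) ω‖ := by
        rw [norm_smul, Real.norm_eq_abs, abs_of_nonneg (by positivity)]
      have h2 : ‖∑ i ∈ Finset.Icc 1 n, e i (b + 1) ω‖
          ≤ ∑ i ∈ Finset.Icc 1 n, ‖e i (b + 1) ω‖ := norm_sum_le _ _
      have h3 : (∑ i ∈ Finset.Icc 1 n, ‖e i (b + 1) ω‖) ^ 2
          ≤ ((Finset.Icc 1 n).card : ℝ) * ∑ i ∈ Finset.Icc 1 n, ‖e i (b + 1) ω‖ ^ 2 :=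
        sq_sum_le_card_mul_sum_sq
      have hcard : ((Finset.Icc 1 n).card : ℝ) = (n : ℝ) := by
        rw [Nat.card_Icc]; push_cast [Nat.add_sub_cancel]; ring
      rw [h1, mul_pow]
      have h4 : ‖∑ i ∈ Finset.Icc 1 n, e i (b + 1) ω‖ ^ 2
          ≤ (n : ℝ) * ∑ i ∈ Finset.Icc 1 n, ‖e i (b + 1) ω‖ ^ 2 := by
        calc ‖∑ i ∈ Finset.Icc 1 n, e i (b + 1) ω‖ ^ 2
            ≤ (∑ i ∈ Finset.Icc 1 n, ‖e i (b + 1) ω‖) ^ 2 :=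
              pow_le_pow_left₀ (norm_nonneg _) h2 2
          _ ≤ (n : ℝ) * ∑ i ∈ Finset.Icc 1 n, ‖e i (b + 1) ω‖ ^ 2 := hcard ▸ h3
      calc ((n : ℝ)⁻¹) ^ 2 * ‖∑ i ∈ Finset.Icc 1 n, e i (b + 1) ω‖ ^ 2
          ≤ ((n : ℝ)⁻¹) ^ 2 * ((n : ℝ) * ∑ i ∈ Finset.Icc 1 n, ‖e i (b + 1) ω‖ ^ 2) := by
            apply mul_le_mul_of_nonneg_left h4 (by positivity)
        _ = (n : ℝ)⁻¹ * ∑ i ∈ Finset.Icc 1 n, ‖e i (b + 1) ω‖ ^ 2 := by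
            field_simp
    calc (‖(n : ℝ)⁻¹ • ∑ i ∈ Finset.Icc 1 n, e i (b + 1) ω‖₊ : ℝ≥0∞) ^ 2
        = ENNReal.ofReal (‖(n : ℝ)⁻¹ • ∑ i ∈ Finset.Icc 1 n, e i (b + 1) ω‖ ^ 2) := by
          rw [ENNReal.ofReal_pow (norm_nonneg _), ofReal_norm, enorm_eq_nnnorm]
      _ ≤ ENNReal.ofReal ((n : ℝ)⁻¹ * ∑ i ∈ Finset.Icc 1 n, ‖e i (b + 1) ω‖ ^ 2) :=
          ENNReal.ofReal_le_ofReal hreal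
      _ = (n : ℝ≥0∞)⁻¹ * ∑ i ∈ Finset.Icc 1 n, (‖e i (b + 1) ω‖₊ : ℝ≥0∞) ^ 2 := by
          rw [ENNReal.ofReal_mul (by positivity), ENNReal.ofReal_inv_of_pos hnR,
            ENNReal.ofReal_natCast,
            ENNReal.ofReal_sum_of_nonneg (fun i _ => sq_nonneg _)]
          congr 1
          exact Finset.sum_congr rfl fun i _ => by
            rw [ENNReal.ofReal_pow (norm_nonneg _), ofReal_norm, enorm_eq_nnnorm]
  calc ∫⁻ ω, (‖(n : ℝ)⁻¹ • ∑ i ∈ Finset.Icc 1 n, e i (b + 1) ω‖₊ : ℝ≥0∞) ^ 2 ∂μ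
      ≤ ∫⁻ ω, (n : ℝ≥0∞)⁻¹ * ∑ i ∈ Finset.Icc 1 n, (‖e i (b + 1) ω‖₊ : ℝ≥0∞) ^ 2 ∂μ :=
        lintegral_mono hpt
    _ = (n : ℝ≥0∞)⁻¹ * ∑ i ∈ Finset.Icc 1 n,
        ∫⁻ ω, (‖e i (b + 1) ω‖₊ : ℝ≥0∞) ^ 2 ∂μ := by
        rw [lintegral_const_mul _ (Finset.measurable_sum _ fun i _ => hfm i (b + 1) hb1),
          lintegral_finset_sum _ fun i _ => hfm i (b + 1) hb1]
    _ ≤ ENNReal.ofReal M := part1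
end

section
/- Let δ ∈ (0,1], L = ⌈1/δ⌉, G > 0, and let C be a δ-contractive compressor. Let z_i^b ∈ ℝ^d (i ∈ {1,…,n}, b ≥ 1) satisfy ‖z_i^b‖ ≤ LG almost surely, with z_i^b depending only on compressor invocations from blocks before b. Define, as in D-FTFCL, e_i¹ = 0, v_i^b = FCC(e_i^b + z_i^b, C, L), e_i^{b+1} = e_i^b + z_i^b − v_i^b, v^b = (1/n) Σ_{i=1}^n v_i^b, ê¹ = 0, s^b = FCC(ê^b + v^b, C, L), and ê^{b+1} = ê^b + v^b − s^b. Then for every b ≥ 1, E[‖ê^{b+1}‖²] ≤ 120 e² L² G², where e is Euler's number. -/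
set_option maxHeartbeats 1000000


open MeasureTheory Real
open scoped ENNReal NNReal BigOperators RealInnerProductSpace

private lemma ofReal_norm_eq_coe_nnnorm {E : Type*} [SeminormedAddGroup E] (a : E) :
    ENNReal.ofReal ‖a‖ = (‖a‖₊ : ℝ≥0∞) := ENNReal.ofReal_eq_coe_nnreal _

private lemma aux_sq_add {E : Type*} [NormedAddCommGroup E] (x y : E) :
    (‖x + y‖₊ : ℝ≥0∞) ^ 2 ≤ 2 * (‖x‖₊ : ℝ≥0∞) ^ 2 + 2 * (‖y‖₊ : ℝ≥0∞) ^ 2 := by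
  calc (‖x + y‖₊ : ℝ≥0∞) ^ 2 = ENNReal.ofReal (‖x + y‖ ^ 2) := by
        rw [← ofReal_norm_eq_coe_nnnorm, ← ENNReal.ofReal_pow (norm_nonneg _)]
    _ ≤ ENNReal.ofReal (2 * ‖x‖ ^ 2 + 2 * ‖y‖ ^ 2) := by
        apply ENNReal.ofReal_le_ofReal
        nlinarith [pow_le_pow_left₀ (norm_nonneg (x + y)) (norm_add_le x y) 2,
          sq_nonneg (‖x‖ - ‖y‖)]
    _ = 2 * (‖x‖₊ : ℝ≥0∞) ^ 2 + 2 * (‖y‖₊ : ℝ≥0∞) ^ 2 := by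
        rw [ENNReal.ofReal_add (by positivity) (by positivity),
          ENNReal.ofReal_mul (by norm_num), ENNReal.ofReal_mul (by norm_num),
          ENNReal.ofReal_pow (norm_nonneg _), ENNReal.ofReal_pow (norm_nonneg _),
          ofReal_norm_eq_coe_nnnorm, ofReal_norm_eq_coe_nnnorm]
        norm_num

private lemma aux_sq_eq {E : Type*} [NormedAddCommGroup E] (x : E) :
    (‖x‖₊ : ℝ≥0∞) ^ 2 = ENNReal.ofReal (‖x‖ ^ 2) := by
  rw [← ofReal_norm_eq_coe_nnnorm, ← ENNReal.ofReal_pow (norm_nonneg _)]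

/-- server-side block error-feedback bound for D-FTFCL. Let `δ ∈ (0,1]`,
`L = ⌈1/δ⌉`, `C` a `δ`-contractive compressor, and `z_i^b` random vectors with
`‖z_i^b‖ ≤ LG` a.s. With the bidirectional block error-feedback recursions of D-FTFCL,
`e_i¹ = 0`, `v_i^b = FCC(e_i^b + z_i^b, C, L)`, `e_i^{b+1} = e_i^b + z_i^b − v_i^b`,
`v^b = (1/n) Σ_i v_i^b`, `ê¹ = 0`, `s^b = FCC(ê^b + v^b, C, L)`,
`ê^{b+1} = ê^b + v^b − s^b`, one has `E[‖ê^{b+1}‖²] ≤ 120e²L²G²` for every `b ≥ 1`,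
where `e` is Euler's number.

The FCC guarantee `E[‖FCC(x,C,L) − x‖²] ≤ (1−δ)^L E[‖x‖²]` for inputs depending only on
past invocations is encoded by the hypotheses `hFCClearner` and `hFCCserver`. -/
theorem dftfcl_server_error_bound
    {d n : ℕ} (hn : 1 ≤ n)
    {Ω : Type*} [MeasurableSpace Ω] (μ : Measure Ω) [IsProbabilityMeasure μ]
    (δ G : ℝ) (hδ0 : 0 < δ) (hδ1 : δ ≤ 1) (hG : 0 < G)
    (L : ℕ) (hL : L = ⌈1 / δ⌉₊)
    (z v e : ℕ → ℕ → Ω → EuclideanSpace ℝ (Fin d))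
    (vbar s ehat : ℕ → Ω → EuclideanSpace ℝ (Fin d))
    (hmz : ∀ i b, Measurable (z i b)) (hmv : ∀ i b, Measurable (v i b))
    (hms : ∀ b, Measurable (s b))
    (hzbound : ∀ i ∈ Finset.Icc 1 n, ∀ b, 1 ≤ b → ∀ᵐ ω ∂μ, ‖z i b ω‖ ≤ (L : ℝ) * G)
    (he1 : ∀ i, e i 1 = fun _ => 0)
    (herec : ∀ i, ∀ b, 1 ≤ b → ∀ ω, e i (b + 1) ω = e i b ω + z i b ω - v i b ω)
    (hvbar : ∀ b ω, vbar b ω = (n : ℝ)⁻¹ • ∑ i ∈ Finset.Icc 1 n, v i b ω)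
    (hehat1 : ehat 1 = fun _ => 0)
    (hehatrec : ∀ b, 1 ≤ b → ∀ ω, ehat (b + 1) ω = ehat b ω + vbar b ω - s b ω)
    (hFCClearner : ∀ i ∈ Finset.Icc 1 n, ∀ b, 1 ≤ b →
      ∫⁻ ω, (‖v i b ω - (e i b ω + z i b ω)‖₊ : ℝ≥0∞) ^ 2 ∂μ
        ≤ ENNReal.ofReal ((1 - δ) ^ L) *
          ∫⁻ ω, (‖e i b ω + z i b ω‖₊ : ℝ≥0∞) ^ 2 ∂μ)
    (hFCCserver : ∀ b, 1 ≤ b →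
      ∫⁻ ω, (‖s b ω - (ehat b ω + vbar b ω)‖₊ : ℝ≥0∞) ^ 2 ∂μ
        ≤ ENNReal.ofReal ((1 - δ) ^ L) *
          ∫⁻ ω, (‖ehat b ω + vbar b ω‖₊ : ℝ≥0∞) ^ 2 ∂μ) :
    ∀ b, 1 ≤ b →
      ∫⁻ ω, (‖ehat (b + 1) ω‖₊ : ℝ≥0∞) ^ 2 ∂μ
        ≤ ENNReal.ofReal (120 * Real.exp 1 ^ 2 * (L : ℝ) ^ 2 * G ^ 2) := by
  set K : ℝ := ((L : ℝ) * G) ^ 2 with hKdef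
  have hK : 0 ≤ K := sq_nonneg _
  have hexp := Real.exp_one_gt_d9
  -- δ * L ≥ 1
  have hLke : (1 : ℝ) / δ ≤ (L : ℝ) := by rw [hL]; exact Nat.le_ceil _
  have hδL : (1 : ℝ) ≤ δ * L := by
    have h := mul_le_mul_of_nonneg_left hLke hδ0.le
    calc (1 : ℝ) = δ * (1 / δ) := by field_simp
      _ ≤ δ * L := h
  -- contraction factor bound
  have hρ : ENNReal.ofReal ((1 - δ) ^ L) ≤ ENNReal.ofReal (Real.exp 1)⁻¹ := by
    apply ENNReal.ofReal_le_ofReal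
    have h1 : (1 : ℝ) - δ ≤ Real.exp (-δ) := by
      have := Real.add_one_le_exp (-δ); linarith
    calc (1 - δ) ^ L ≤ Real.exp (-δ) ^ L :=
          pow_le_pow_left₀ (by linarith) h1 L
      _ = Real.exp ((L : ℝ) * (-δ)) := (Real.exp_nat_mul _ L).symm
      _ ≤ Real.exp (-1) := Real.exp_le_exp.mpr (by nlinarith)
      _ = (Real.exp 1)⁻¹ := Real.exp_neg 1
  -- contraction step helper
  have hstep : ∀ (c k : ℝ) (A : ℝ≥0∞), 0 ≤ k → k ≤ c * Real.exp 1 →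
      A ≤ ENNReal.ofReal k →
      ENNReal.ofReal ((1 - δ) ^ L) * A ≤ ENNReal.ofReal c := by
    intro c k A hk hck hA
    calc ENNReal.ofReal ((1 - δ) ^ L) * A
        ≤ ENNReal.ofReal (Real.exp 1)⁻¹ * ENNReal.ofReal k := mul_le_mul' hρ hA
      _ = ENNReal.ofReal ((Real.exp 1)⁻¹ * k) := (ENNReal.ofReal_mul (by positivity)).symm
      _ ≤ ENNReal.ofReal c := by
          apply ENNReal.ofReal_le_ofReal
          calc (Real.exp 1)⁻¹ * k ≤ (Real.exp 1)⁻¹ * (c * Real.exp 1) := by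
                apply mul_le_mul_of_nonneg_left hck (by positivity)
            _ = c := by field_simp
  -- combining constants
  have hcomb : ∀ x y : ℝ, 0 ≤ x → 0 ≤ y →
      (2 : ℝ≥0∞) * ENNReal.ofReal x + 2 * ENNReal.ofReal y
        = ENNReal.ofReal (2 * x + 2 * y) := by
    intro x y hx hy
    rw [ENNReal.ofReal_add (by positivity) (by positivity),
      ENNReal.ofReal_mul (by norm_num), ENNReal.ofReal_mul (by norm_num)]
    norm_num
  -- splitting lemma
  have hsplit : ∀ (f g : Ω → EuclideanSpace ℝ (Fin d)), Measurable g →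
      ∀ Bf Bg : ℝ≥0∞, (∫⁻ ω, (‖f ω‖₊ : ℝ≥0∞) ^ 2 ∂μ) ≤ Bf →
      (∫⁻ ω, (‖g ω‖₊ : ℝ≥0∞) ^ 2 ∂μ) ≤ Bg →
      ∫⁻ ω, (‖f ω + g ω‖₊ : ℝ≥0∞) ^ 2 ∂μ ≤ 2 * Bf + 2 * Bg := by
    intro f g hg Bf Bg hf hgB
    calc ∫⁻ ω, (‖f ω + g ω‖₊ : ℝ≥0∞) ^ 2 ∂μ
        ≤ ∫⁻ ω, (2 * (‖f ω‖₊ : ℝ≥0∞) ^ 2 + 2 * (‖g ω‖₊ : ℝ≥0∞) ^ 2) ∂μ :=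
          lintegral_mono fun ω => aux_sq_add _ _
      _ = (∫⁻ ω, 2 * (‖f ω‖₊ : ℝ≥0∞) ^ 2 ∂μ) + ∫⁻ ω, 2 * (‖g ω‖₊ : ℝ≥0∞) ^ 2 ∂μ :=
          lintegral_add_right _ ((hg.nnnorm.coe_nnreal_ennreal.pow_const 2).const_mul 2)
      _ = 2 * (∫⁻ ω, (‖f ω‖₊ : ℝ≥0∞) ^ 2 ∂μ) + 2 * ∫⁻ ω, (‖g ω‖₊ : ℝ≥0∞) ^ 2 ∂μ := by
          rw [lintegral_const_mul' 2 _ (by norm_num), lintegral_const_mul' 2 _ (by norm_num)]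
      _ ≤ 2 * Bf + 2 * Bg := by gcongr
  -- bound on z
  have hz2 : ∀ i ∈ Finset.Icc 1 n, ∀ b, 1 ≤ b →
      ∫⁻ ω, (‖z i b ω‖₊ : ℝ≥0∞) ^ 2 ∂μ ≤ ENNReal.ofReal K := by
    intro i hi b hb
    have h : ∫⁻ ω, (‖z i b ω‖₊ : ℝ≥0∞) ^ 2 ∂μ ≤ ∫⁻ _, ENNReal.ofReal K ∂μ := by
      refine lintegral_mono_ae ?_
      filter_upwards [hzbound i hi b hb] with ω hω
      rw [aux_sq_eq]
      exact ENNReal.ofReal_le_ofReal (by nlinarith [norm_nonneg (z i b ω)])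
    simpa using h
  -- measurability of e
  have hme : ∀ i b, 1 ≤ b → Measurable (e i b) := by
    intro i b hb
    induction b with
    | zero => omega
    | succ k ih =>
      by_cases hk : 1 ≤ k
      · have heq : e i (k + 1) = fun ω => e i k ω + z i k ω - v i k ω :=
          funext (herec i k hk)
        rw [heq]
        exact ((ih hk).add (hmz i k)).sub (hmv i k)
      · have hk0 : k = 0 := by omega
        subst hk0
        rw [he1 i]; exact measurable_const
  have hmvbar : ∀ b, Measurable (vbar b) := by
    intro b
    have heq : vbar b = fun ω => (n : ℝ)⁻¹ • ∑ i ∈ Finset.Icc 1 n, v i b ω :=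
      funext (hvbar b)
    rw [heq]
    exact (Finset.measurable_sum _ (fun i _ => hmv i b)).const_smul ((n : ℝ)⁻¹)
  -- learner-side error bound, by induction
  have hez : ∀ b, 1 ≤ b → ∀ i ∈ Finset.Icc 1 n,
      ∫⁻ ω, (‖e i b ω‖₊ : ℝ≥0∞) ^ 2 ∂μ ≤ ENNReal.ofReal (3 * K) := by
    intro b hb
    induction b, hb using Nat.le_induction with
    | base => intro i _; simp [he1 i]
    | succ b hb ih =>
      intro i hi
      have hsum : ∫⁻ ω, (‖e i b ω + z i b ω‖₊ : ℝ≥0∞) ^ 2 ∂μ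
          ≤ ENNReal.ofReal (8 * K) := by
        have h := hsplit (e i b) (z i b) (hmz i b) _ _ (ih i hi) (hz2 i hi b hb)
        rw [hcomb _ _ (by positivity) hK] at h
        calc _ ≤ _ := h
          _ ≤ ENNReal.ofReal (8 * K) := ENNReal.ofReal_le_ofReal (by nlinarith)
      have heq : ∀ ω, (‖e i (b + 1) ω‖₊ : ℝ≥0∞) ^ 2
          = (‖v i b ω - (e i b ω + z i b ω)‖₊ : ℝ≥0∞) ^ 2 := by
        intro ω
        rw [herec i b hb ω,
          show e i b ω + z i b ω - v i b ω = -(v i b ω - (e i b ω + z i b ω)) from by abel,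
          nnnorm_neg]
      calc ∫⁻ ω, (‖e i (b + 1) ω‖₊ : ℝ≥0∞) ^ 2 ∂μ
          = ∫⁻ ω, (‖v i b ω - (e i b ω + z i b ω)‖₊ : ℝ≥0∞) ^ 2 ∂μ :=
            lintegral_congr heq
        _ ≤ ENNReal.ofReal ((1 - δ) ^ L) *
              ∫⁻ ω, (‖e i b ω + z i b ω‖₊ : ℝ≥0∞) ^ 2 ∂μ := hFCClearner i hi b hb
        _ ≤ ENNReal.ofReal (3 * K) :=
            hstep _ _ _ (by positivity) (by nlinarith) hsum
  -- bound on ‖e + z‖², valid for all b ≥ 1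
  have hsum : ∀ b, 1 ≤ b → ∀ i ∈ Finset.Icc 1 n,
      ∫⁻ ω, (‖e i b ω + z i b ω‖₊ : ℝ≥0∞) ^ 2 ∂μ ≤ ENNReal.ofReal (8 * K) := by
    intro b hb i hi
    have h := hsplit (e i b) (z i b) (hmz i b) _ _ (hez b hb i hi) (hz2 i hi b hb)
    rw [hcomb _ _ (by positivity) hK] at h
    calc _ ≤ _ := h
      _ ≤ ENNReal.ofReal (8 * K) := ENNReal.ofReal_le_ofReal (by nlinarith)
  -- bound on v
  have hv2 : ∀ b, 1 ≤ b → ∀ i ∈ Finset.Icc 1 n,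
      ∫⁻ ω, (‖v i b ω‖₊ : ℝ≥0∞) ^ 2 ∂μ ≤ ENNReal.ofReal (22 * K) := by
    intro b hb i hi
    have hBg : ∫⁻ ω, (‖v i b ω - (e i b ω + z i b ω)‖₊ : ℝ≥0∞) ^ 2 ∂μ
        ≤ ENNReal.ofReal (3 * K) := by
      calc _ ≤ _ := hFCClearner i hi b hb
        _ ≤ ENNReal.ofReal (3 * K) :=
            hstep _ _ _ (by positivity) (by nlinarith) (hsum b hb i hi)
    have hfg : ∀ ω, v i b ω
        = (e i b ω + z i b ω) + (v i b ω - (e i b ω + z i b ω)) := fun ω => by abel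
    have h := hsplit (fun ω => e i b ω + z i b ω)
      (fun ω => v i b ω - (e i b ω + z i b ω))
      ((hmv i b).sub ((hme i b hb).add (hmz i b))) _ _ (hsum b hb i hi) hBg
    rw [hcomb _ _ (by positivity) (by positivity)] at h
    calc ∫⁻ ω, (‖v i b ω‖₊ : ℝ≥0∞) ^ 2 ∂μ
        = ∫⁻ ω, (‖(e i b ω + z i b ω) + (v i b ω - (e i b ω + z i b ω))‖₊ : ℝ≥0∞) ^ 2 ∂μ :=
          lintegral_congr fun ω => by rw [← hfg ω]
      _ ≤ ENNReal.ofReal (2 * (8 * K) + 2 * (3 * K)) := h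
      _ = ENNReal.ofReal (22 * K) := by ring_nf
  -- bound on vbar
  have hnR : (0 : ℝ) < (n : ℝ) := by exact_mod_cast hn
  have hvbar2 : ∀ b, 1 ≤ b →
      ∫⁻ ω, (‖vbar b ω‖₊ : ℝ≥0∞) ^ 2 ∂μ ≤ ENNReal.ofReal (22 * K) := by
    intro b hb
    have hpt : ∀ ω, (‖vbar b ω‖₊ : ℝ≥0∞) ^ 2
        ≤ (n : ℝ≥0∞)⁻¹ * ∑ i ∈ Finset.Icc 1 n, (‖v i b ω‖₊ : ℝ≥0∞) ^ 2 := by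
      intro ω
      have h1 : ‖vbar b ω‖ ^ 2
          ≤ (n : ℝ)⁻¹ * ∑ i ∈ Finset.Icc 1 n, ‖v i b ω‖ ^ 2 := by
        rw [hvbar b ω, norm_smul, norm_inv, Real.norm_natCast, mul_pow]
        have hcs : ‖∑ i ∈ Finset.Icc 1 n, v i b ω‖ ^ 2
            ≤ (n : ℝ) * ∑ i ∈ Finset.Icc 1 n, ‖v i b ω‖ ^ 2 := by
          calc ‖∑ i ∈ Finset.Icc 1 n, v i b ω‖ ^ 2
              ≤ (∑ i ∈ Finset.Icc 1 n, ‖v i b ω‖) ^ 2 :=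
                pow_le_pow_left₀ (norm_nonneg _) (norm_sum_le _ _) 2
            _ ≤ (Finset.Icc 1 n).card * ∑ i ∈ Finset.Icc 1 n, ‖v i b ω‖ ^ 2 :=
                sq_sum_le_card_mul_sum_sq
            _ = (n : ℝ) * ∑ i ∈ Finset.Icc 1 n, ‖v i b ω‖ ^ 2 := by
                rw [Nat.card_Icc]; norm_num
        calc ((n : ℝ)⁻¹) ^ 2 * ‖∑ i ∈ Finset.Icc 1 n, v i b ω‖ ^ 2
            ≤ ((n : ℝ)⁻¹) ^ 2 * ((n : ℝ) * ∑ i ∈ Finset.Icc 1 n, ‖v i b ω‖ ^ 2) := by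
              apply mul_le_mul_of_nonneg_left hcs (by positivity)
          _ = (n : ℝ)⁻¹ * ∑ i ∈ Finset.Icc 1 n, ‖v i b ω‖ ^ 2 := by
              field_simp
      calc (‖vbar b ω‖₊ : ℝ≥0∞) ^ 2 = ENNReal.ofReal (‖vbar b ω‖ ^ 2) := aux_sq_eq _
        _ ≤ ENNReal.ofReal ((n : ℝ)⁻¹ * ∑ i ∈ Finset.Icc 1 n, ‖v i b ω‖ ^ 2) :=
            ENNReal.ofReal_le_ofReal h1
        _ = (n : ℝ≥0∞)⁻¹ * ∑ i ∈ Finset.Icc 1 n, (‖v i b ω‖₊ : ℝ≥0∞) ^ 2 := by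
            rw [ENNReal.ofReal_mul (by positivity),
              ENNReal.ofReal_inv_of_pos hnR, ENNReal.ofReal_natCast,
              ENNReal.ofReal_sum_of_nonneg (fun i _ => by positivity)]
            congr 1
            exact Finset.sum_congr rfl fun i _ => (aux_sq_eq _).symm
    have hne0 : (n : ℝ≥0∞) ≠ 0 := by
      simp only [ne_eq, Nat.cast_eq_zero]; omega
    calc ∫⁻ ω, (‖vbar b ω‖₊ : ℝ≥0∞) ^ 2 ∂μ
        ≤ ∫⁻ ω, (n : ℝ≥0∞)⁻¹ * ∑ i ∈ Finset.Icc 1 n, (‖v i b ω‖₊ : ℝ≥0∞) ^ 2 ∂μ :=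
          lintegral_mono hpt
      _ = (n : ℝ≥0∞)⁻¹ * ∫⁻ ω, ∑ i ∈ Finset.Icc 1 n, (‖v i b ω‖₊ : ℝ≥0∞) ^ 2 ∂μ :=
          lintegral_const_mul' _ _ (by simp [hne0])
      _ = (n : ℝ≥0∞)⁻¹ * ∑ i ∈ Finset.Icc 1 n, ∫⁻ ω, (‖v i b ω‖₊ : ℝ≥0∞) ^ 2 ∂μ := by
          rw [lintegral_finset_sum _ (fun i _ => ((hmv i b).nnnorm.coe_nnreal_ennreal.pow_const 2))]
      _ ≤ (n : ℝ≥0∞)⁻¹ * ∑ i ∈ Finset.Icc 1 n, ENNReal.ofReal (22 * K) := by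
          gcongr with i hi
          exact hv2 b hb i hi
      _ = (n : ℝ≥0∞)⁻¹ * ((n : ℝ≥0∞) * ENNReal.ofReal (22 * K)) := by
          rw [Finset.sum_const, Nat.card_Icc, nsmul_eq_mul]
          norm_num
      _ = ENNReal.ofReal (22 * K) := by
          rw [← mul_assoc, ENNReal.inv_mul_cancel hne0 (by simp), one_mul]
  -- server-side error bound, by induction
  have hehat2 : ∀ b, 1 ≤ b →
      ∫⁻ ω, (‖ehat b ω‖₊ : ℝ≥0∞) ^ 2 ∂μ ≤ ENNReal.ofReal (62 * K) := by
    intro b hb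
    induction b, hb using Nat.le_induction with
    | base => simp [hehat1]
    | succ b hb ih =>
      have hsum2 : ∫⁻ ω, (‖ehat b ω + vbar b ω‖₊ : ℝ≥0∞) ^ 2 ∂μ
          ≤ ENNReal.ofReal (168 * K) := by
        have h := hsplit (ehat b) (vbar b) (hmvbar b) _ _ ih (hvbar2 b hb)
        rw [hcomb _ _ (by positivity) (by positivity)] at h
        calc _ ≤ _ := h
          _ = ENNReal.ofReal (168 * K) := by ring_nf
      have heq : ∀ ω, (‖ehat (b + 1) ω‖₊ : ℝ≥0∞) ^ 2
          = (‖s b ω - (ehat b ω + vbar b ω)‖₊ : ℝ≥0∞) ^ 2 := by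
        intro ω
        rw [hehatrec b hb ω,
          show ehat b ω + vbar b ω - s b ω = -(s b ω - (ehat b ω + vbar b ω)) from by abel,
          nnnorm_neg]
      calc ∫⁻ ω, (‖ehat (b + 1) ω‖₊ : ℝ≥0∞) ^ 2 ∂μ
          = ∫⁻ ω, (‖s b ω - (ehat b ω + vbar b ω)‖₊ : ℝ≥0∞) ^ 2 ∂μ :=
            lintegral_congr heq
        _ ≤ ENNReal.ofReal ((1 - δ) ^ L) *
              ∫⁻ ω, (‖ehat b ω + vbar b ω‖₊ : ℝ≥0∞) ^ 2 ∂μ := hFCCserver b hb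
        _ ≤ ENNReal.ofReal (62 * K) :=
            hstep _ _ _ (by positivity) (by nlinarith) hsum2
  -- conclusion
  intro b hb
  calc ∫⁻ ω, (‖ehat (b + 1) ω‖₊ : ℝ≥0∞) ^ 2 ∂μ
      ≤ ENNReal.ofReal (62 * K) := hehat2 (b + 1) (by omega)
    _ ≤ ENNReal.ofReal (120 * Real.exp 1 ^ 2 * (L : ℝ) ^ 2 * G ^ 2) := by
        apply ENNReal.ofReal_le_ofReal
        have hK' : K = (L : ℝ) ^ 2 * G ^ 2 := mul_pow _ _ 2
        rw [hK']
        have h0 : (2.7 : ℝ) ≤ Real.exp 1 := by linarith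
        have hsq : (7.29 : ℝ) ≤ Real.exp 1 ^ 2 := by
          calc (7.29 : ℝ) = 2.7 * 2.7 := by norm_num
            _ ≤ Real.exp 1 * Real.exp 1 :=
                mul_le_mul h0 h0 (by norm_num) (le_trans (by norm_num) h0)
            _ = Real.exp 1 ^ 2 := (sq (Real.exp 1)).symm
        have h1 : (62 : ℝ) ≤ 120 * Real.exp 1 ^ 2 := by linarith
        calc 62 * ((L : ℝ) ^ 2 * G ^ 2)
            ≤ (120 * Real.exp 1 ^ 2) * ((L : ℝ) ^ 2 * G ^ 2) :=
              mul_le_mul_of_nonneg_right h1 (by positivity)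
          _ = 120 * Real.exp 1 ^ 2 * (L : ℝ) ^ 2 * G ^ 2 := by ring
end
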